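/- arXiv:1608.02041 — 3 statements merged into one kernel-verified Lean document; each statement's English description precedes it below -/
import Mathlib

section
/- Let C₁ and C₂ be two ellipses in ℝ² centered at the origin with semi-major axes a₁ > a₂ > 0 and semi-minor axes b₁, b₂ with a₁ > b₁ > 0, a₂ > b₂ > 0, a₁ ≠ a₂ and b₁ ≠ b₂. If neither ellipse is contained in the closed region bounded by the other, then there exist exactly four distinct lines in ℝ² tangent to both C₁ and C₂ that do not meet the open interiors of either ellipse. -/
/-- A line in `ℂ ≅ ℝ²`. -/
def IsLine (ℓ : Set ℂ) : Prop :=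
  ∃ p d : ℂ, d ≠ 0 ∧ ℓ = {z | ∃ t : ℝ, z = p + (t : ℂ) * d}

/-- The ellipse centered at the origin with parametrization `t ↦ A e^{it} + B e^{-it}`,
having semi-major axis `|A| + |B|` and semi-minor axis `||A| - |B||`. -/
def ellipseCurve (A B : ℂ) : Set ℂ :=
  {z | ∃ t : ℝ, z = A * Complex.exp ((t : ℂ) * Complex.I)
    + B * Complex.exp (-((t : ℂ) * Complex.I))}

/-- The closed region bounded by the ellipse `ellipseCurve A B`. -/
def ellipseClosedRegion (A B : ℂ) : Set ℂ :=
  {z | ∃ w : ℂ, ‖w‖ ≤ 1 ∧ z = A * w + B * (starRingEnd ℂ) w}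

/-- The open region bounded by the ellipse `ellipseCurve A B`. -/
def ellipseOpenRegion (A B : ℂ) : Set ℂ :=
  {z | ∃ w : ℂ, ‖w‖ < 1 ∧ z = A * w + B * (starRingEnd ℂ) w}

/-- A common exterior tangent line of the two ellipses: a line tangent to each
(meeting each at exactly one point) that does not meet the open interiors. -/
def IsCommonExteriorTangent (A₁ B₁ A₂ B₂ : ℂ) (ℓ : Set ℂ) : Prop :=
  IsLine ℓ ∧ (∃! z : ℂ, z ∈ ℓ ∧ z ∈ ellipseCurve A₁ B₁) ∧
    (∃! z : ℂ, z ∈ ℓ ∧ z ∈ ellipseCurve A₂ B₂) ∧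
    ℓ ∩ ellipseOpenRegion A₁ B₁ = ∅ ∧ ℓ ∩ ellipseOpenRegion A₂ B₂ = ∅

/-!
Write `C = {A w + B w̄ : |w| = 1}` and describe a line by a normal vector `n` and a level `c` as
`{z : Re (n̄ z) = c}`. Since `Re (n̄ (A w + B w̄)) = Re ((n̄ A + n B̄) w)`, the line meets `C` in as
many points as the line `Re (α w) = c`, `α = n̄ A + n B̄`, meets the unit circle: exactly one iff
`|c| = |α|`, and then it misses the interior. So a common exterior tangent with normal `n` exists
iff the support functions `|n̄ Aᵢ + n B̄ᵢ|` of the two ellipses agree at `n`, and there are then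
exactly two of them, `c = ±|α|`. The difference of the squared support functions is a real
quadratic form in `n`. It is positive in the direction of the major axis of `C₁`, because `C₁` is
longer than `C₂`, and negative at the normal of `C₁`'s level curve through a point of `C₂` lying
outside `C₁`. An indefinite binary quadratic form vanishes on exactly two lines through the
origin, which gives the four tangents.
-/

open Complex ComplexConjugate Function

noncomputable section

def ellipseMap (A B : ℂ) : ℂ →ₗ[ℝ] ℂ where
  toFun w := A * w + B * conj w
  map_add' w₁ w₂ := by simp only [map_add]; ring
  map_smul' r w := by simp only [real_smul, map_mul, conj_ofReal, RingHom.id_apply]; ring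

@[simp]
lemma ellipseMap_apply (A B w : ℂ) : ellipseMap A B w = A * w + B * conj w := rfl

lemma ellipseMap_injective {A B : ℂ} (hAB : ‖A‖ ≠ ‖B‖) : Injective (ellipseMap A B) := by
  refine (injective_iff_map_eq_zero _).2 fun w hw => ?_
  have h : ‖A‖ * ‖w‖ = ‖B‖ * ‖w‖ := by
    simpa using congrArg norm (eq_neg_of_add_eq_zero_left hw)
  by_contra hw0
  exact hAB (mul_right_cancel₀ (norm_ne_zero_iff.2 hw0) h)

lemma ellipseMap_bijective {A B : ℂ} (hAB : ‖A‖ ≠ ‖B‖) : Bijective (ellipseMap A B) :=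
  ⟨ellipseMap_injective hAB, LinearMap.injective_iff_surjective.1 (ellipseMap_injective hAB)⟩

lemma mem_ellipseCurve_iff {A B z : ℂ} :
    z ∈ ellipseCurve A B ↔ ∃ w, ‖w‖ = 1 ∧ ellipseMap A B w = z := by
  constructor
  · rintro ⟨t, rfl⟩
    refine ⟨exp (t * I), norm_exp_ofReal_mul_I t, ?_⟩
    simp [← exp_conj, map_mul]
  · rintro ⟨w, hw, rfl⟩
    refine ⟨arg w, ?_⟩
    have hw' : exp (arg w * I) = w := by
      simpa [hw] using norm_mul_exp_arg_mul_I w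
    have hc : conj w = exp (-(arg w * I)) := by
      nth_rewrite 1 [← hw']
      simp [← exp_conj, map_mul]
    simp [hw', hc]

def normalLine (n : ℂ) (c : ℝ) : Set ℂ := {z | (conj n * z).re = c}

lemma mem_normalLine {n z : ℂ} {c : ℝ} : z ∈ normalLine n c ↔ (conj n * z).re = c := Iff.rfl

lemma re_conj_mul_comm (u z : ℂ) : (conj u * z).re = (conj z * u).re := by
  rw [← conj_re, map_mul, conj_conj, mul_comm]

lemma re_conj_mul_eq_zero_iff {u z : ℂ} (hu : u ≠ 0) :
    (conj u * z).re = 0 ↔ ∃ t : ℝ, z = t * (I * u) := by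
  have hu' : conj u * (I * u) = ((‖u‖ ^ 2 : ℝ) : ℂ) * I := by
    push_cast; rw [← conj_mul']; ring
  constructor
  · intro h
    refine ⟨(conj u * z).im / ‖u‖ ^ 2, mul_left_cancel₀ ((map_ne_zero conj).2 hu) ?_⟩
    rw [mul_left_comm, hu', ← mul_assoc, ← ofReal_mul, div_mul_cancel₀ _ (by positivity)]
    exact Complex.ext (by simp [h]) (by simp)
  · rintro ⟨t, rfl⟩
    rw [mul_left_comm, hu', ← mul_assoc, ← ofReal_mul, mul_I_re, ofReal_im, neg_zero]

lemma div_conj_mem_normalLine {n : ℂ} (hn : n ≠ 0) (c : ℝ) :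
    (c : ℂ) / conj n ∈ normalLine n c := by
  rw [mem_normalLine, mul_div_cancel₀ _ ((map_ne_zero _).2 hn), ofReal_re]

lemma mem_normalLine_iff_exists {n p z : ℂ} {c : ℝ} (hn : n ≠ 0) (hp : p ∈ normalLine n c) :
    z ∈ normalLine n c ↔ ∃ t : ℝ, z = p + t * (I * n) := by
  rw [mem_normalLine] at hp ⊢
  rw [← hp, ← sub_eq_zero, ← sub_re, ← mul_sub, re_conj_mul_eq_zero_iff hn]
  simp only [sub_eq_iff_eq_add']

lemma isLine_normalLine {n : ℂ} (hn : n ≠ 0) (c : ℝ) : IsLine (normalLine n c) :=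
  ⟨_, I * n, mul_ne_zero I_ne_zero hn,
    Set.ext fun _ => mem_normalLine_iff_exists hn (div_conj_mem_normalLine hn c)⟩

lemma IsLine.exists_eq_normalLine {ℓ : Set ℂ} (h : IsLine ℓ) :
    ∃ n : ℂ, ∃ c : ℝ, n ≠ 0 ∧ ℓ = normalLine n c := by
  obtain ⟨p, d, hd, rfl⟩ := h
  have hn : -I * d ≠ 0 := mul_ne_zero (neg_ne_zero.2 I_ne_zero) hd
  refine ⟨-I * d, (conj (-I * d) * p).re, hn, Set.ext fun z => ?_⟩
  rw [mem_normalLine_iff_exists hn rfl]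
  simp [← mul_assoc]

lemma normalLine_real_mul {r : ℝ} (hr : r ≠ 0) (n : ℂ) (c : ℝ) :
    normalLine (r * n) c = normalLine n (c / r) := by
  ext z
  simp only [mem_normalLine, map_mul, conj_ofReal, mul_assoc, re_ofReal_mul]
  rw [eq_div_iff hr, mul_comm]

lemma exists_eq_real_mul_of_normalLine_eq {n n' : ℂ} {c c' : ℝ} (hn : n ≠ 0)
    (h : normalLine n c = normalLine n' c') : ∃ r : ℝ, n' = r * n ∧ c' = r * c := by
  have hp := div_conj_mem_normalLine hn c
  have hq : (c : ℂ) / conj n + I * n ∈ normalLine n c :=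
    (mem_normalLine_iff_exists hn hp).2 ⟨1, by simp⟩
  rw [h, mem_normalLine] at hp hq
  rw [mul_add, add_re, hp, add_eq_left, re_conj_mul_comm,
    re_conj_mul_eq_zero_iff (mul_ne_zero I_ne_zero hn)] at hq
  obtain ⟨t, rfl⟩ := hq
  have hn' : (t : ℂ) * (I * (I * n)) = ((-t : ℝ) : ℂ) * n := by
    rw [← mul_assoc I, I_mul_I]; push_cast; ring
  refine ⟨-t, hn', ?_⟩
  rw [← hp, hn', map_mul, conj_ofReal, mul_assoc, mul_div_cancel₀ _ ((map_ne_zero conj).2 hn),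
    ← ofReal_mul, ofReal_re]

lemma normalLine_ne_normalLine_neg {n : ℂ} {c : ℝ} (hn : n ≠ 0) (hc : c ≠ 0) :
    normalLine n c ≠ normalLine n (-c) := by
  intro h
  obtain ⟨r, hr, hc'⟩ := exists_eq_real_mul_of_normalLine_eq hn h
  have hr1 : (1 : ℝ) = r := by
    exact_mod_cast mul_right_cancel₀ hn ((one_mul n).trans hr)
  rw [← hr1] at hc'
  exact hc (by linarith)

lemma normalLine_ne_of_forall_ne_real_mul {n n' : ℂ} {c c' : ℝ} (hn : n ≠ 0)
    (h : ∀ r : ℝ, n' ≠ r * n) : normalLine n c ≠ normalLine n' c' := fun heq =>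
  let ⟨r, hr, _⟩ := exists_eq_real_mul_of_normalLine_eq hn heq
  h r hr

/-- `‖supportCoeff A B n‖` is the support function of `ellipseCurve A B` in direction `n`,
by `re_conj_mul_ellipseMap`. -/
def supportCoeff (A B n : ℂ) : ℂ := conj n * A + n * conj B

lemma supportCoeff_eq_ellipseMap (A B n : ℂ) : supportCoeff A B n = ellipseMap (conj B) A n := by
  rw [supportCoeff, ellipseMap_apply]; ring

lemma supportCoeff_bijective {A B : ℂ} (hAB : ‖A‖ ≠ ‖B‖) : Bijective (supportCoeff A B) := by
  rw [funext (supportCoeff_eq_ellipseMap A B)]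
  exact ellipseMap_bijective (by rwa [norm_conj, ne_comm])

lemma supportCoeff_ne_zero {A B n : ℂ} (hAB : ‖A‖ ≠ ‖B‖) (hn : n ≠ 0) :
    supportCoeff A B n ≠ 0 := by
  rw [supportCoeff_eq_ellipseMap]
  exact (map_ne_zero_iff _ (ellipseMap_injective (by rwa [norm_conj, ne_comm]))).2 hn

lemma re_conj_mul_ellipseMap (A B n w : ℂ) :
    (conj n * ellipseMap A B w).re = (supportCoeff A B n * w).re := by
  simp only [ellipseMap_apply, supportCoeff, mul_re, add_re, add_im, mul_im, conj_re, conj_im]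
  ring

lemma abs_re_conj_mul_ellipseMap_le (A B n w : ℂ) :
    |(conj n * ellipseMap A B w).re| ≤ ‖supportCoeff A B n‖ * ‖w‖ := by
  rw [re_conj_mul_ellipseMap, ← norm_mul]
  exact abs_re_le_norm _

lemma existsUnique_norm_eq_one_re_mul_eq_iff {α : ℂ} (hα : α ≠ 0) (c : ℝ) :
    (∃! w : ℂ, ‖w‖ = 1 ∧ (α * w).re = c) ↔ |c| = ‖α‖ := by
  constructor
  · -- `w ↦ conj (α * w) / α` preserves both conditions, so the unique solution has `α * w` real
    rintro ⟨w, ⟨hw, hc⟩, huniq⟩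
    have hαw : α * (conj (α * w) / α) = conj (α * w) := mul_div_cancel₀ _ hα
    have hw' : conj (α * w) / α = w :=
      huniq _ ⟨by rw [norm_div, norm_conj, norm_mul, hw, mul_one, div_self (norm_ne_zero_iff.2 hα)],
        by rw [hαw, conj_re, hc]⟩
    rw [hw', eq_comm, conj_eq_iff_im] at hαw
    rw [← hc, abs_re_eq_norm.2 hαw, norm_mul, hw, mul_one]
  · intro hc
    have hre : ∀ w : ℂ, ‖w‖ = 1 → (α * w).re = c → α * w = c := fun w hw hwc =>
      Complex.ext (by simp [hwc]) (by
        rw [ofReal_im]; exact abs_re_eq_norm.1 (by rw [hwc, hc, norm_mul, hw, mul_one]))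
    refine ⟨c / α, ⟨?_, by rw [mul_div_cancel₀ _ hα, ofReal_re]⟩, fun w hw => ?_⟩
    · rw [norm_div, norm_real, Real.norm_eq_abs, hc, div_self (norm_ne_zero_iff.2 hα)]
    · rw [eq_div_iff hα, mul_comm]; exact hre w hw.1 hw.2

lemma ellipseMap_mem_ellipseCurve_iff {A B w : ℂ} (hAB : ‖A‖ ≠ ‖B‖) :
    ellipseMap A B w ∈ ellipseCurve A B ↔ ‖w‖ = 1 := by
  rw [mem_ellipseCurve_iff]
  exact ⟨fun ⟨w', hw', h⟩ => ellipseMap_injective hAB h ▸ hw', fun hw => ⟨w, hw, rfl⟩⟩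

lemma existsUnique_mem_normalLine_ellipseCurve_iff {A B n : ℂ} {c : ℝ} (hAB : ‖A‖ ≠ ‖B‖)
    (hn : n ≠ 0) :
    (∃! z, z ∈ normalLine n c ∧ z ∈ ellipseCurve A B) ↔ |c| = ‖supportCoeff A B n‖ := by
  rw [(ellipseMap_bijective hAB).existsUnique_iff,
    ← existsUnique_norm_eq_one_re_mul_eq_iff (supportCoeff_ne_zero hAB hn)]
  simp only [mem_normalLine, re_conj_mul_ellipseMap, ellipseMap_mem_ellipseCurve_iff hAB,
    and_comm]

lemma normalLine_inter_ellipseOpenRegion_eq_empty {A B n : ℂ} {c : ℝ}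
    (hc : ‖supportCoeff A B n‖ ≤ |c|) (hc0 : c ≠ 0) :
    normalLine n c ∩ ellipseOpenRegion A B = ∅ := by
  refine Set.eq_empty_of_forall_notMem fun z ⟨hz, w, hw, hzw⟩ => ?_
  have hle := abs_re_conj_mul_ellipseMap_le A B n w
  rw [← ellipseMap_apply] at hzw
  rw [mem_normalLine, hzw] at hz
  rw [hz] at hle
  have : |c| < |c| :=
    calc |c| ≤ ‖supportCoeff A B n‖ * ‖w‖ := hle
      _ ≤ |c| * ‖w‖ := mul_le_mul_of_nonneg_right hc (norm_nonneg w)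
      _ < |c| := mul_lt_of_lt_one_right (abs_pos.2 hc0) hw
  exact lt_irrefl _ this

lemma isCommonExteriorTangent_normalLine_iff {A₁ B₁ A₂ B₂ n : ℂ} {c : ℝ}
    (hAB₁ : ‖A₁‖ ≠ ‖B₁‖) (hAB₂ : ‖A₂‖ ≠ ‖B₂‖) (hn : n ≠ 0) :
    IsCommonExteriorTangent A₁ B₁ A₂ B₂ (normalLine n c) ↔
      |c| = ‖supportCoeff A₁ B₁ n‖ ∧ |c| = ‖supportCoeff A₂ B₂ n‖ := by
  simp only [IsCommonExteriorTangent, existsUnique_mem_normalLine_ellipseCurve_iff hAB₁ hn,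
    existsUnique_mem_normalLine_ellipseCurve_iff hAB₂ hn, isLine_normalLine hn, true_and]
  refine ⟨fun h => ⟨h.1, h.2.1⟩, fun ⟨h₁, h₂⟩ => ⟨h₁, h₂, ?_⟩⟩
  have hc0 : c ≠ 0 := abs_pos.1 (h₁ ▸ norm_pos_iff.2 (supportCoeff_ne_zero hAB₁ hn))
  exact ⟨normalLine_inter_ellipseOpenRegion_eq_empty h₁.ge hc0,
    normalLine_inter_ellipseOpenRegion_eq_empty h₂.ge hc0⟩

lemma norm_supportCoeff_le (A B n : ℂ) : ‖supportCoeff A B n‖ ≤ ‖n‖ * (‖A‖ + ‖B‖) :=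
  (norm_add_le _ _).trans_eq (by simp only [norm_mul, norm_conj]; ring)

lemma exists_norm_supportCoeff_eq (A B : ℂ) :
    ∃ n ≠ 0, ‖supportCoeff A B n‖ = ‖n‖ * (‖A‖ + ‖B‖) := by
  obtain ⟨n, hn, hsq⟩ : ∃ n : ℂ, n ≠ 0 ∧ (A * B ≠ 0 → n ^ 2 = A * B) := by
    by_cases hAB : A * B = 0
    · exact ⟨1, one_ne_zero, fun h => absurd hAB h⟩
    · obtain ⟨n, hn⟩ := IsAlgClosed.exists_pow_nat_eq (A * B) two_pos
      exact ⟨n, by rintro rfl; simp_all, fun _ => hn⟩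
  refine ⟨n, hn, ?_⟩
  -- with `n ^ 2 = A * B` the two summands of `supportCoeff A B n` point in the same direction
  have hray : SameRay ℝ (conj n * A) (n * conj B) := by
    by_cases hAB : A * B = 0
    · rcases mul_eq_zero.1 hAB with rfl | rfl <;> simp
    · refine .inr <| .inr ⟨‖B‖ ^ 2, ‖n‖ ^ 2, by simp_all, by positivity, ?_⟩
      simp only [real_smul, ofReal_pow]
      rw [← mul_conj' B, ← mul_conj' n]
      linear_combination (-(conj n * conj B)) * hsq hAB
  rw [supportCoeff, hray.norm_add]
  simp only [norm_mul, norm_conj]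
  ring

def supportGap (A₁ B₁ A₂ B₂ n : ℂ) : ℝ :=
  ‖supportCoeff A₁ B₁ n‖ ^ 2 - ‖supportCoeff A₂ B₂ n‖ ^ 2

lemma supportGap_eq_zero_iff {A₁ B₁ A₂ B₂ n : ℂ} :
    supportGap A₁ B₁ A₂ B₂ n = 0 ↔ ‖supportCoeff A₁ B₁ n‖ = ‖supportCoeff A₂ B₂ n‖ := by
  rw [supportGap, sub_eq_zero, sq_eq_sq₀ (norm_nonneg _) (norm_nonneg _)]

lemma supportGap_eq (A₁ B₁ A₂ B₂ n : ℂ) :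
    supportGap A₁ B₁ A₂ B₂ n =
      (normSq A₁ + normSq B₁ - normSq A₂ - normSq B₂ + 2 * (A₁ * B₁ - A₂ * B₂).re) * n.re ^ 2
        + 2 * (2 * (A₁ * B₁ - A₂ * B₂).im) * n.re * n.im
        + (normSq A₁ + normSq B₁ - normSq A₂ - normSq B₂ - 2 * (A₁ * B₁ - A₂ * B₂).re)
          * n.im ^ 2 := by
  simp only [supportGap, Complex.sq_norm, supportCoeff, normSq_apply, add_re, add_im, mul_re,
    mul_im, conj_re, conj_im, sub_re, sub_im]
  ring

lemma exists_supportGap_pos {A₁ B₁ A₂ B₂ : ℂ} (h : ‖A₂‖ + ‖B₂‖ < ‖A₁‖ + ‖B₁‖) :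
    ∃ n, 0 < supportGap A₁ B₁ A₂ B₂ n := by
  obtain ⟨n, hn, heq⟩ := exists_norm_supportCoeff_eq A₁ B₁
  refine ⟨n, sub_pos.2 (pow_lt_pow_left₀ ?_ (norm_nonneg _) two_ne_zero)⟩
  calc ‖supportCoeff A₂ B₂ n‖ ≤ ‖n‖ * (‖A₂‖ + ‖B₂‖) := norm_supportCoeff_le A₂ B₂ n
    _ < ‖n‖ * (‖A₁‖ + ‖B₁‖) := mul_lt_mul_of_pos_left h (norm_pos_iff.2 hn)
    _ = _ := heq.symm

lemma exists_supportGap_neg {A₁ B₁ A₂ B₂ : ℂ} (hAB₁ : ‖A₁‖ ≠ ‖B₁‖)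
    (h : ¬ ellipseCurve A₂ B₂ ⊆ ellipseClosedRegion A₁ B₁) :
    ∃ n, supportGap A₁ B₁ A₂ B₂ n < 0 := by
  obtain ⟨z, hz₂, hz₁⟩ := Set.not_subset.1 h
  obtain ⟨w, rfl⟩ := (ellipseMap_bijective hAB₁).2 z
  have hw : 1 < ‖w‖ := lt_of_not_ge fun hw => hz₁ ⟨w, hw, rfl⟩
  -- the support of `C₁` in direction `n` is `‖w‖`, but `C₂` reaches `Re (conj n * z) = ‖w‖ ^ 2`
  obtain ⟨n, hn⟩ := (supportCoeff_bijective hAB₁).2 (conj w)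
  obtain ⟨u, hu, hzu⟩ := mem_ellipseCurve_iff.1 hz₂
  have key : ‖w‖ ^ 2 ≤ ‖supportCoeff A₂ B₂ n‖ := by
    have hle := abs_re_conj_mul_ellipseMap_le A₂ B₂ n u
    rw [hzu, hu, mul_one, re_conj_mul_ellipseMap, hn, conj_mul', ← ofReal_pow, ofReal_re,
      abs_of_nonneg (by positivity)] at hle
    exact hle
  refine ⟨n, ?_⟩
  rw [supportGap, hn, norm_conj, sub_neg]
  calc ‖w‖ ^ 2 < (‖w‖ ^ 2) ^ 2 := lt_self_pow₀ (one_lt_pow₀ hw two_ne_zero) one_lt_two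
    _ ≤ _ := pow_le_pow_left₀ (by positivity) key 2

section BinaryQuadraticForm

variable {q : ℂ → ℝ} {a b c : ℝ}

lemma mul_lt_sq_of_exists_pos_of_exists_neg
    (hq : ∀ n, q n = a * n.re ^ 2 + 2 * b * n.re * n.im + c * n.im ^ 2)
    (hpos : ∃ n, 0 < q n) (hneg : ∃ n, q n < 0) : a * c < b ^ 2 := by
  obtain ⟨p, hp⟩ := hpos
  obtain ⟨m, hm⟩ := hneg
  by_contra! hD
  have hDy : ∀ n : ℂ, 0 ≤ (a * c - b ^ 2) * n.im ^ 2 := fun n =>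
    mul_nonneg (sub_nonneg.2 hD) (sq_nonneg _)
  have hDx : ∀ n : ℂ, 0 ≤ (a * c - b ^ 2) * n.re ^ 2 := fun n =>
    mul_nonneg (sub_nonneg.2 hD) (sq_nonneg _)
  -- completing the square: `a q = (a x + b y)² + (a c - b²) y²`, and symmetrically for `c q`
  have ha : ∀ n, 0 ≤ a * q n := fun n => by
    rw [hq]; nlinarith [sq_nonneg (a * n.re + b * n.im), hDy n]
  have hc : ∀ n, 0 ≤ c * q n := fun n => by
    rw [hq]; nlinarith [sq_nonneg (c * n.im + b * n.re), hDx n]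
  have ha0 : a = 0 := by nlinarith [ha p, ha m]
  have hc0 : c = 0 := by nlinarith [hc p, hc m]
  have hb0 : b = 0 := by nlinarith
  rw [hq, ha0, hb0, hc0] at hp
  simp at hp

lemma exists_factorization_of_mul_lt_sq (hD : a * c < b ^ 2) :
    ∃ k : ℝ, k ≠ 0 ∧ ∃ u₁ u₂ : ℂ, (conj u₁ * u₂).im ≠ 0 ∧ ∀ n : ℂ,
      k * (a * n.re ^ 2 + 2 * b * n.re * n.im + c * n.im ^ 2) =
        (conj u₁ * n).re * (conj u₂ * n).re := by
  by_cases ha : a = 0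
  · have hb : b ≠ 0 := by rintro rfl; simp [ha] at hD
    refine ⟨1, one_ne_zero, ⟨0, 1⟩, ⟨2 * b, c⟩, by simpa [mul_im] using hb, fun n => ?_⟩
    simp only [mul_re, conj_re, conj_im, ha]
    ring
  · set s := √(b ^ 2 - a * c)
    have hs : s ^ 2 = b ^ 2 - a * c := Real.sq_sqrt (by linarith)
    have hs0 : s ≠ 0 := (Real.sqrt_pos.2 (by linarith)).ne'
    refine ⟨a, ha, ⟨a, b - s⟩, ⟨a, b + s⟩, ?_, fun n => ?_⟩
    · simp only [mul_im, conj_re, conj_im]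
      ring_nf
      simp [ha, hs0]
    · simp only [mul_re, conj_re, conj_im]
      linear_combination n.im ^ 2 * hs

lemma exists_null_directions
    (hq : ∀ n, q n = a * n.re ^ 2 + 2 * b * n.re * n.im + c * n.im ^ 2)
    (hpos : ∃ n, 0 < q n) (hneg : ∃ n, q n < 0) :
    ∃ u v : ℂ, u ≠ 0 ∧ v ≠ 0 ∧ (∀ r : ℝ, v ≠ r * u) ∧
      ∀ n, q n = 0 ↔ (∃ r : ℝ, n = r * u) ∨ ∃ r : ℝ, n = r * v := by
  obtain ⟨k, hk, u₁, u₂, hcross, hfac⟩ :=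
    exists_factorization_of_mul_lt_sq (mul_lt_sq_of_exists_pos_of_exists_neg hq hpos hneg)
  have hu₁ : u₁ ≠ 0 := by rintro rfl; simp at hcross
  have hu₂ : u₂ ≠ 0 := by rintro rfl; simp at hcross
  refine ⟨I * u₁, I * u₂, mul_ne_zero I_ne_zero hu₁, mul_ne_zero I_ne_zero hu₂,
    fun r h => hcross ?_, fun n => ?_⟩
  · rw [mul_left_comm, mul_right_inj' I_ne_zero] at h
    rw [h, mul_left_comm, conj_mul', ← ofReal_pow, ← ofReal_mul, ofReal_im]
  · rw [← mul_right_inj' hk, mul_zero, hq, hfac, mul_eq_zero, re_conj_mul_eq_zero_iff hu₁,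
      re_conj_mul_eq_zero_iff hu₂]

end BinaryQuadraticForm

lemma isCommonExteriorTangent_normalLine_iff_of_supportGap_eq_zero {A₁ B₁ A₂ B₂ n : ℂ} {c : ℝ}
    (hAB₁ : ‖A₁‖ ≠ ‖B₁‖) (hAB₂ : ‖A₂‖ ≠ ‖B₂‖) (hn : n ≠ 0) (hgap : supportGap A₁ B₁ A₂ B₂ n = 0) :
    IsCommonExteriorTangent A₁ B₁ A₂ B₂ (normalLine n c) ↔ |c| = ‖supportCoeff A₁ B₁ n‖ := by
  rw [isCommonExteriorTangent_normalLine_iff hAB₁ hAB₂ hn, ← supportGap_eq_zero_iff.1 hgap,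
    and_self]

lemma supportGap_eq_zero_of_isCommonExteriorTangent {A₁ B₁ A₂ B₂ n : ℂ} {c : ℝ}
    (hAB₁ : ‖A₁‖ ≠ ‖B₁‖) (hAB₂ : ‖A₂‖ ≠ ‖B₂‖) (hn : n ≠ 0)
    (h : IsCommonExteriorTangent A₁ B₁ A₂ B₂ (normalLine n c)) :
    supportGap A₁ B₁ A₂ B₂ n = 0 :=
  let ⟨h₁, h₂⟩ := (isCommonExteriorTangent_normalLine_iff hAB₁ hAB₂ hn).1 h
  supportGap_eq_zero_iff.2 (h₁.symm.trans h₂)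

lemma normalLine_real_mul_eq_or_of_isCommonExteriorTangent {A₁ B₁ A₂ B₂ n : ℂ} {r c : ℝ}
    (hAB₁ : ‖A₁‖ ≠ ‖B₁‖) (hAB₂ : ‖A₂‖ ≠ ‖B₂‖) (hn : n ≠ 0) (hgap : supportGap A₁ B₁ A₂ B₂ n = 0)
    (hr : r ≠ 0) (h : IsCommonExteriorTangent A₁ B₁ A₂ B₂ (normalLine (r * n) c)) :
    normalLine (r * n) c = normalLine n ‖supportCoeff A₁ B₁ n‖ ∨
      normalLine (r * n) c = normalLine n (-‖supportCoeff A₁ B₁ n‖) := by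
  rw [normalLine_real_mul hr] at h ⊢
  rw [isCommonExteriorTangent_normalLine_iff_of_supportGap_eq_zero hAB₁ hAB₂ hn hgap,
    abs_eq (norm_nonneg _)] at h
  rcases h with h | h <;> simp [h]

theorem stmt_6_general (A₁ B₁ A₂ B₂ : ℂ)
    (hmaj : ‖A₁‖ + ‖B₁‖ > ‖A₂‖ + ‖B₂‖)
    (hmin1 : |‖A₁‖ - ‖B₁‖| > 0)
    (hmin2 : |‖A₂‖ - ‖B₂‖| > 0)
    (hnc1 : ¬ ellipseCurve A₂ B₂ ⊆ ellipseClosedRegion A₁ B₁) :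
    ∃ ℓ₁ ℓ₂ ℓ₃ ℓ₄ : Set ℂ,
      ℓ₁ ≠ ℓ₂ ∧ ℓ₁ ≠ ℓ₃ ∧ ℓ₁ ≠ ℓ₄ ∧ ℓ₂ ≠ ℓ₃ ∧ ℓ₂ ≠ ℓ₄ ∧ ℓ₃ ≠ ℓ₄ ∧
      IsCommonExteriorTangent A₁ B₁ A₂ B₂ ℓ₁ ∧
      IsCommonExteriorTangent A₁ B₁ A₂ B₂ ℓ₂ ∧
      IsCommonExteriorTangent A₁ B₁ A₂ B₂ ℓ₃ ∧
      IsCommonExteriorTangent A₁ B₁ A₂ B₂ ℓ₄ ∧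
      ∀ ℓ : Set ℂ, IsCommonExteriorTangent A₁ B₁ A₂ B₂ ℓ →
        ℓ = ℓ₁ ∨ ℓ = ℓ₂ ∨ ℓ = ℓ₃ ∨ ℓ = ℓ₄ := by
  have hAB₁ : ‖A₁‖ ≠ ‖B₁‖ := sub_ne_zero.1 (abs_pos.1 hmin1)
  have hAB₂ : ‖A₂‖ ≠ ‖B₂‖ := sub_ne_zero.1 (abs_pos.1 hmin2)
  obtain ⟨u, v, hu, hv, huv, hnull⟩ := exists_null_directions (supportGap_eq A₁ B₁ A₂ B₂)
    (exists_supportGap_pos hmaj) (exists_supportGap_neg hAB₁ hnc1)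
  have hu₀ : supportGap A₁ B₁ A₂ B₂ u = 0 := (hnull u).2 (.inl ⟨1, by simp⟩)
  have hv₀ : supportGap A₁ B₁ A₂ B₂ v = 0 := (hnull v).2 (.inr ⟨1, by simp⟩)
  have tangent {n : ℂ} (hn : n ≠ 0) (hgap : supportGap A₁ B₁ A₂ B₂ n = 0) (c : ℝ) :=
    isCommonExteriorTangent_normalLine_iff_of_supportGap_eq_zero (c := c) hAB₁ hAB₂ hn hgap
  have hsupp {n : ℂ} (hn : n ≠ 0) : ‖supportCoeff A₁ B₁ n‖ ≠ 0 :=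
    norm_ne_zero_iff.2 (supportCoeff_ne_zero hAB₁ hn)
  refine ⟨normalLine u ‖supportCoeff A₁ B₁ u‖, normalLine u (-‖supportCoeff A₁ B₁ u‖),
    normalLine v ‖supportCoeff A₁ B₁ v‖, normalLine v (-‖supportCoeff A₁ B₁ v‖),
    normalLine_ne_normalLine_neg hu (hsupp hu), normalLine_ne_of_forall_ne_real_mul hu huv,
    normalLine_ne_of_forall_ne_real_mul hu huv, normalLine_ne_of_forall_ne_real_mul hu huv,
    normalLine_ne_of_forall_ne_real_mul hu huv, normalLine_ne_normalLine_neg hv (hsupp hv),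
    (tangent hu hu₀ _).2 (abs_norm _), (tangent hu hu₀ _).2 (by simp),
    (tangent hv hv₀ _).2 (abs_norm _), (tangent hv hv₀ _).2 (by simp), fun ℓ hℓ => ?_⟩
  obtain ⟨n, c, hn, rfl⟩ := hℓ.1.exists_eq_normalLine
  rcases (hnull n).1 (supportGap_eq_zero_of_isCommonExteriorTangent hAB₁ hAB₂ hn hℓ) with
    ⟨r, rfl⟩ | ⟨r, rfl⟩
  · have := normalLine_real_mul_eq_or_of_isCommonExteriorTangent hAB₁ hAB₂ hu hu₀
      (ofReal_ne_zero.1 (left_ne_zero_of_mul hn)) hℓ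
    tauto
  · have := normalLine_real_mul_eq_or_of_isCommonExteriorTangent hAB₁ hAB₂ hv hv₀
      (ofReal_ne_zero.1 (left_ne_zero_of_mul hn)) hℓ
    tauto

/-- Two origin-centered ellipses with distinct semi-major and semi-minor axes,
neither contained in the closed region bounded by the other, admit exactly four
common exterior tangent lines. -/
theorem stmt_6 (A₁ B₁ A₂ B₂ : ℂ)
    (hmaj : ‖A₁‖ + ‖B₁‖ > ‖A₂‖ + ‖B₂‖)
    (hmaj2 : ‖A₂‖ + ‖B₂‖ > 0)
    (hax1 : ‖A₁‖ + ‖B₁‖ > |‖A₁‖ - ‖B₁‖|)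
    (hmin1 : |‖A₁‖ - ‖B₁‖| > 0)
    (hax2 : ‖A₂‖ + ‖B₂‖ > |‖A₂‖ - ‖B₂‖|)
    (hmin2 : |‖A₂‖ - ‖B₂‖| > 0)
    (hminne : |‖A₁‖ - ‖B₁‖| ≠ |‖A₂‖ - ‖B₂‖|)
    (hnc1 : ¬ ellipseCurve A₂ B₂ ⊆ ellipseClosedRegion A₁ B₁)
    (hnc2 : ¬ ellipseCurve A₁ B₁ ⊆ ellipseClosedRegion A₂ B₂) :
    ∃ ℓ₁ ℓ₂ ℓ₃ ℓ₄ : Set ℂ,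
      ℓ₁ ≠ ℓ₂ ∧ ℓ₁ ≠ ℓ₃ ∧ ℓ₁ ≠ ℓ₄ ∧ ℓ₂ ≠ ℓ₃ ∧ ℓ₂ ≠ ℓ₄ ∧ ℓ₃ ≠ ℓ₄ ∧
      IsCommonExteriorTangent A₁ B₁ A₂ B₂ ℓ₁ ∧
      IsCommonExteriorTangent A₁ B₁ A₂ B₂ ℓ₂ ∧
      IsCommonExteriorTangent A₁ B₁ A₂ B₂ ℓ₃ ∧
      IsCommonExteriorTangent A₁ B₁ A₂ B₂ ℓ₄ ∧
      ∀ ℓ : Set ℂ, IsCommonExteriorTangent A₁ B₁ A₂ B₂ ℓ →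
        ℓ = ℓ₁ ∨ ℓ = ℓ₂ ∨ ℓ = ℓ₃ ∨ ℓ = ℓ₄ :=
  stmt_6_general A₁ B₁ A₂ B₂ hmaj hmin1 hmin2 hnc1
end
end

section
/- Let h₂, h̃₂ : [0, 2π] → ℂ \ {0} be continuous maps with h₂(0) = h₂(2π) and h̃₂(0) = h̃₂(2π). Suppose the winding number of h̃₂ around 0 equals 1 and the winding number of h₂ around 0 equals 0. Then there exist φ ∈ [0, 2π) and λ > 0 with h₂(φ) = λ·h̃₂(φ). -/
open Complex Real

/- The difference `θ₂ - θ̃₂` of the two continuous arguments drops by exactly `2π` along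
`[0, 2π]`, so by the intermediate value theorem it meets a multiple of `2π` at some parameter
`φ`; there `h₂ φ` and `h̃₂ φ` have the same direction. Choosing the multiple in
`(θ₂ 0 - θ̃₂ 0 - 2π, θ₂ 0 - θ̃₂ 0]` keeps `φ` away from the endpoint `2π`. -/

theorem exists_mem_Ico_eq_int_mul_of_add_le {f : ℝ → ℝ} {a b p : ℝ} (hab : a ≤ b)
    (hf : ContinuousOn f (Set.Icc a b)) (hp : 0 < p) (hdrop : f b + p ≤ f a) :
    ∃ x ∈ Set.Ico a b, ∃ k : ℤ, f x = k * p := by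
  set k : ℤ := ⌊f a / p⌋
  have hk_le : k * p ≤ f a := (le_div_iff₀ hp).mp (Int.floor_le _)
  have hk_gt : f a < (k + 1) * p := (div_lt_iff₀ hp).mp (Int.lt_floor_add_one _)
  obtain ⟨x, hx, hfx⟩ :=
    intermediate_value_Icc' hab hf ⟨by linarith, hk_le⟩
  refine ⟨x, ⟨hx.1, lt_of_le_of_ne hx.2 ?_⟩, k, hfx⟩
  rintro rfl
  linarith

theorem Complex.exists_pos_mul_eq_of_arg_sub_eq_int_mul_two_pi {a b : ℂ} {α β : ℝ}
    (ha : a ≠ 0) (hb : b ≠ 0) (hα : a = ‖a‖ * exp (α * I)) (hβ : b = ‖b‖ * exp (β * I))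
    {m : ℤ} (hαβ : α - β = m * (2 * π)) :
    ∃ lam : ℝ, 0 < lam ∧ a = lam * b := by
  have hexp : exp (α * I) = exp (β * I) := by
    rw [show α = β + m * (2 * π) by linarith]
    push_cast
    rw [add_mul, exp_add, mul_assoc, exp_int_mul_two_pi_mul_I, mul_one]
  refine ⟨‖a‖ / ‖b‖, div_pos (norm_pos_iff.mpr ha) (norm_pos_iff.mpr hb), ?_⟩
  have hb' : (‖b‖ : ℂ) ≠ 0 := by exact_mod_cast norm_ne_zero_iff.mpr hb
  calc a = ‖a‖ * exp (β * I) := by rw [← hexp]; exact hα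
    _ = ↑(‖a‖ / ‖b‖) * (‖b‖ * exp (β * I)) := by push_cast; field_simp
    _ = ↑(‖a‖ / ‖b‖) * b := by rw [← hβ]

theorem stmt_7_general (h₂ ht₂ : ℝ → ℂ) (θ₂ θt₂ : ℝ → ℝ)
    (hnz : ∀ t ∈ Set.Icc 0 (2 * Real.pi), h₂ t ≠ 0)
    (hnz' : ∀ t ∈ Set.Icc 0 (2 * Real.pi), ht₂ t ≠ 0)
    (hθc : ContinuousOn θ₂ (Set.Icc 0 (2 * Real.pi)))
    (hθc' : ContinuousOn θt₂ (Set.Icc 0 (2 * Real.pi)))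
    (harg : ∀ t ∈ Set.Icc 0 (2 * Real.pi),
      h₂ t = (‖h₂ t‖ : ℂ) * Complex.exp ((θ₂ t : ℂ) * Complex.I))
    (harg' : ∀ t ∈ Set.Icc 0 (2 * Real.pi),
      ht₂ t = (‖ht₂ t‖ : ℂ) * Complex.exp ((θt₂ t : ℂ) * Complex.I))
    (hwind : θ₂ (2 * Real.pi) - θ₂ 0 = 0)
    (hwind' : θt₂ (2 * Real.pi) - θt₂ 0 = 2 * Real.pi) :
    ∃ φ ∈ Set.Ico 0 (2 * Real.pi), ∃ lam : ℝ, 0 < lam ∧ h₂ φ = (lam : ℂ) * ht₂ φ := by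
  obtain ⟨φ, hφ, k, hk⟩ := exists_mem_Ico_eq_int_mul_of_add_le (f := fun t ↦ θ₂ t - θt₂ t)
    two_pi_pos.le (hθc.sub hθc') two_pi_pos (by linarith)
  have hφ' : φ ∈ Set.Icc 0 (2 * π) := Set.Ico_subset_Icc_self hφ
  exact ⟨φ, hφ, exists_pos_mul_eq_of_arg_sub_eq_int_mul_two_pi (hnz φ hφ') (hnz' φ hφ')
    (harg φ hφ') (harg' φ hφ') hk⟩

/-- Two closed curves in `ℂ \ {0}` over `[0,2π]`, one with winding number `1` around
the origin and the other with winding number `0` (expressed via continuous argument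
functions), must cross the same ray from the origin at a common parameter. -/
theorem stmt_7 (h₂ ht₂ : ℝ → ℂ) (θ₂ θt₂ : ℝ → ℝ)
    (hc : ContinuousOn h₂ (Set.Icc 0 (2 * Real.pi)))
    (hc' : ContinuousOn ht₂ (Set.Icc 0 (2 * Real.pi)))
    (hnz : ∀ t ∈ Set.Icc 0 (2 * Real.pi), h₂ t ≠ 0)
    (hnz' : ∀ t ∈ Set.Icc 0 (2 * Real.pi), ht₂ t ≠ 0)
    (hcl : h₂ (2 * Real.pi) = h₂ 0) (hcl' : ht₂ (2 * Real.pi) = ht₂ 0)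
    (hθc : ContinuousOn θ₂ (Set.Icc 0 (2 * Real.pi)))
    (hθc' : ContinuousOn θt₂ (Set.Icc 0 (2 * Real.pi)))
    (harg : ∀ t ∈ Set.Icc 0 (2 * Real.pi),
      h₂ t = (‖h₂ t‖ : ℂ) * Complex.exp ((θ₂ t : ℂ) * Complex.I))
    (harg' : ∀ t ∈ Set.Icc 0 (2 * Real.pi),
      ht₂ t = (‖ht₂ t‖ : ℂ) * Complex.exp ((θt₂ t : ℂ) * Complex.I))
    (hwind : θ₂ (2 * Real.pi) - θ₂ 0 = 0)
    (hwind' : θt₂ (2 * Real.pi) - θt₂ 0 = 2 * Real.pi) :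
    ∃ φ ∈ Set.Ico 0 (2 * Real.pi), ∃ lam : ℝ, 0 < lam ∧ h₂ φ = (lam : ℂ) * ht₂ φ :=
  stmt_7_general h₂ ht₂ θ₂ θt₂ hnz hnz' hθc hθc' harg harg' hwind hwind'
end

section
/- Let g : (0,∞) → ℝ be given by g(r) = 1 − 2M/r − a²M²s/r⁴ for parameters M > 0, a ∈ ℝ, s ∈ [0,1]. Then g has exactly one root r₁ in (0,∞) when a²s > 0, this root satisfies r₁ > 2M, and r₁ depends monotonically (non-decreasingly) on s. -/
/-!
Clearing denominators, a positive root of `1 - 2M/r - c/r⁴` is a solution of `r³(r - 2M) = c`.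
For `c > 0` such a solution has `r > 2M`, and on `{r | 0 ≤ r ∧ 2M ≤ r}` the quartic `r³(r - 2M)`
is strictly increasing; it vanishes at `0` and is unbounded, so it takes every value `c > 0`
exactly once, and the solution increases with `c`. Here `c = a²M²s`, which is increasing in `s`.
-/

/-- `-g(T, T)` at radius `r` for the mass `M`, with `c = a²M² sin²θ`. -/
noncomputable def ergoFun (M c r : ℝ) : ℝ := 1 - 2 * M / r - c / r ^ 4

theorem ergoFun_eq_zero_iff {M c r : ℝ} (hr : r ≠ 0) :
    ergoFun M c r = 0 ↔ r ^ 3 * (r - 2 * M) = c := by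
  rw [ergoFun, sub_sub, sub_eq_zero]
  field_simp
  constructor <;> intro h <;> linarith

theorem strictMonoOn_pow_three_mul_sub (M : ℝ) :
    StrictMonoOn (fun r : ℝ => r ^ 3 * (r - 2 * M)) {r | 0 ≤ r ∧ 2 * M ≤ r} := by
  rintro x ⟨hx, hxM⟩ y - hxy
  have hdiff : y ^ 3 * (y - 2 * M) - x ^ 3 * (x - 2 * M)
      = (y - x) * ((y - 2 * M) * (y ^ 2 + x * y + x ^ 2) + x ^ 3) := by ring
  have hpos : 0 < (y - x) * ((y - 2 * M) * (y ^ 2 + x * y + x ^ 2) + x ^ 3) := by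
    have hy : 0 < y := hx.trans_lt hxy
    have hyM : 0 < y - 2 * M := by linarith
    refine mul_pos (by linarith) (add_pos_of_pos_of_nonneg (mul_pos hyM ?_) (pow_nonneg hx 3))
    positivity
  simp only
  linarith

theorem two_mul_lt_of_ergoFun_eq_zero {M c r : ℝ} (hc : 0 < c) (hr : 0 < r)
    (h : ergoFun M c r = 0) : 2 * M < r := by
  rw [ergoFun_eq_zero_iff hr.ne'] at h
  have := pos_of_mul_pos_right (h ▸ hc) (pow_pos hr 3).le
  linarith

theorem le_of_ergoFun_eq_zero {M c c' r r' : ℝ} (hc : 0 < c) (hcc' : c ≤ c')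
    (hr : 0 < r) (hr' : 0 < r') (h : ergoFun M c r = 0) (h' : ergoFun M c' r' = 0) :
    r ≤ r' := by
  have hdom : ∀ {c r}, 0 < c → 0 < r → ergoFun M c r = 0 → r ∈ {r | 0 ≤ r ∧ 2 * M ≤ r} :=
    fun hc hr h => ⟨hr.le, (two_mul_lt_of_ergoFun_eq_zero hc hr h).le⟩
  rw [← (strictMonoOn_pow_three_mul_sub M).le_iff_le (hdom hc hr h)
    (hdom (hc.trans_le hcc') hr' h')]
  rw [ergoFun_eq_zero_iff hr.ne'] at h
  rw [ergoFun_eq_zero_iff hr'.ne'] at h'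
  simpa only [h, h'] using hcc'

theorem exists_pos_ergoFun_eq_zero (M : ℝ) {c : ℝ} (hc : 0 < c) :
    ∃ r, 0 < r ∧ ergoFun M c r = 0 := by
  set R := 1 + |2 * M| + c
  have hR : c ≤ R ^ 3 * (R - 2 * M) := by
    have h1 : 1 ≤ R := by simp only [R]; linarith [abs_nonneg (2 * M)]
    have h2 : c ≤ R - 2 * M := by simp only [R]; linarith [le_abs_self (2 * M)]
    nlinarith [one_le_pow₀ (n := 3) h1]
  obtain ⟨r, hrR, hr⟩ := intermediate_value_Icc (by positivity : (0 : ℝ) ≤ R)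
    (f := fun r : ℝ => r ^ 3 * (r - 2 * M)) (by fun_prop) ⟨by simpa using hc.le, hR⟩
  have hr0 : r ≠ 0 := by rintro rfl; simp at hr; linarith
  exact ⟨r, hrR.1.lt_of_ne' hr0, (ergoFun_eq_zero_iff hr0).2 hr⟩

/-- The function `g(r) = 1 - 2M/r - a²M²s/r⁴` has exactly one positive root when
`a² s > 0`; the root is larger than `2M` and depends monotonically
(non-decreasingly) on `s`. -/
theorem stmt_15 (M a : ℝ) (hM : 0 < M) :
    ∀ s ∈ Set.Icc (0 : ℝ) 1, 0 < a ^ 2 * s →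
      (∃! r : ℝ, 0 < r ∧ 1 - 2 * M / r - a ^ 2 * M ^ 2 * s / r ^ 4 = 0) ∧
      (∀ r : ℝ, 0 < r → 1 - 2 * M / r - a ^ 2 * M ^ 2 * s / r ^ 4 = 0 → 2 * M < r) ∧
      (∀ s' ∈ Set.Icc (0 : ℝ) 1, 0 < a ^ 2 * s' → s ≤ s' →
        ∀ r r' : ℝ, 0 < r → 0 < r' →
          1 - 2 * M / r - a ^ 2 * M ^ 2 * s / r ^ 4 = 0 →
          1 - 2 * M / r' - a ^ 2 * M ^ 2 * s' / r' ^ 4 = 0 → r ≤ r') := by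
  intro s _ hs
  have hc : 0 < a ^ 2 * M ^ 2 * s := by
    rw [mul_right_comm]
    exact mul_pos hs (pow_pos hM 2)
  obtain ⟨r, hr, hroot⟩ := exists_pos_ergoFun_eq_zero M hc
  refine ⟨⟨r, ⟨hr, hroot⟩, fun r' ⟨hr', hroot'⟩ => ?_⟩,
    fun r hr => two_mul_lt_of_ergoFun_eq_zero hc hr, ?_⟩
  · exact le_antisymm (le_of_ergoFun_eq_zero hc le_rfl hr' hr hroot' hroot)
      (le_of_ergoFun_eq_zero hc le_rfl hr hr' hroot hroot')
  · intro s' _ _ hss' r r' hr hr' h h'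
    exact le_of_ergoFun_eq_zero hc (mul_le_mul_of_nonneg_left hss' (by positivity)) hr hr' h h'
end
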